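/- arXiv:1510.02502 — 2 statements merged into one kernel-verified Lean document; each statement's English description precedes it below -/
import Mathlib

section
/- The bias of the smoothed persistence intensity estimator satisfies $\mathbb{E}(\hat{\kappa}_\tau(x,y)) - \kappa_P(x,y) = \frac{\mu_2}{2}\, \Delta \kappa_P(x,y)\, \tau^2 + o(\tau^2)$ as $\tau \to 0$, where $\mu_2 = \int a^2 K(a)\,da$ and $\Delta$ is the Laplacian. -/
/-!
Substituting `s = p - τ q` turns `𝔼 κ̂_τ(p)` into `G τ = ∫ K(a) K(b) κ(p - τ (a, b)) da db`,
which is defined for every `τ`, including `τ = 0`. Differentiating twice under the integral sign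
(dominated by the second moment of `K` and the bounds on `Dκ`, `D²κ`) gives `G 0 = κ p`,
`G' 0 = 0` because `K` is even, and `G'' 0 = ∫ K(a) K(b) D²κ(p) (a, b) (a, b) = μ₂ Δκ(p)`.
A second-order Taylor expansion of `G` at `0` with Peano remainder is then the claim.
-/

open MeasureTheory Filter Set Asymptotics
open scoped Topology ProbabilityTheory

theorem MeasureTheory.Integrable.mul_of_integrable_sq_mul {α : Type*} [MeasurableSpace α]
    {μ : Measure α} {f g : α → ℝ} (hg : AEStronglyMeasurable g μ) (hf : Integrable f μ)
    (hgf : Integrable (fun a => g a ^ 2 * f a) μ) : Integrable (fun a => g a * f a) μ := by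
  refine (hf.norm.add hgf.norm).mono' (hg.mul hf.aestronglyMeasurable) (ae_of_all _ fun a => ?_)
  simp only [norm_mul, Real.norm_eq_abs, Pi.add_apply, abs_pow]
  nlinarith [abs_nonneg (f a), sq_nonneg (|g a| - 1), sq_abs (g a)]

theorem isLittleO_sub_sub_sq_of_hasDerivAt {G G' : ℝ → ℝ} {c : ℝ}
    (hG : ∀ t, HasDerivAt G (G' t) t) (hG'0 : G' 0 = 0) (hG' : HasDerivAt G' c 0) :
    (fun t => G t - G 0 - c / 2 * t ^ 2) =o[𝓝 0] fun t => t ^ 2 := by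
  have hderiv : ∀ t, HasDerivAt (fun t => G t - c / 2 * t ^ 2) (G' t - c * t) t := fun t =>
    ((hG t).sub ((hasDerivAt_pow 2 t).const_mul (c / 2))).congr_deriv (by norm_num; ring)
  have hsmall : (fun t => G' t - c * t) =o[𝓝 0] fun t => t := by
    simpa [hG'0, mul_comm] using hasDerivAt_iff_isLittleO.mp hG'
  have h := convex_univ.isLittleO_pow_succ_real (mem_univ 0)
    (fun t _ => (hderiv t).hasDerivWithinAt) (n := 1) (by simpa using hsmall)
  simp only [nhdsWithin_univ, sub_zero] at h
  exact h.congr_left fun t => by ring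

section KernelSmoothing

variable {E : Type*} [NormedAddCommGroup E] [NormedSpace ℝ E]

theorem hasDerivAt_comp_sub_smul {F : Type*} [NormedAddCommGroup F] [NormedSpace ℝ F]
    {f : E → F} {p q : E} {τ : ℝ} (hf : DifferentiableAt ℝ f (p - τ • q)) :
    HasDerivAt (fun t : ℝ => f (p - t • q)) (-fderiv ℝ f (p - τ • q) q) τ := by
  have hline : HasDerivAt (fun t : ℝ => p - t • q) (-q) τ := by
    simpa using ((hasDerivAt_id τ).smul_const q).const_sub p
  simpa [Function.comp_def] using hf.hasFDerivAt.comp_hasDerivAt τ hline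

theorem deriv_deriv_comp_of_hasDerivAt {f : E → ℝ} (hf : Differentiable ℝ f)
    (hf' : Differentiable ℝ (fderiv ℝ f)) {γ : ℝ → E} {v : E} (hγ : ∀ s, HasDerivAt γ v s)
    (s : ℝ) : deriv (deriv fun t => f (γ t)) s = fderiv ℝ (fderiv ℝ f) (γ s) v v := by
  have h1 : (deriv fun t => f (γ t)) = fun t => fderiv ℝ f (γ t) v :=
    funext fun t => ((hf _).hasFDerivAt.comp_hasDerivAt t (hγ t)).deriv
  rw [h1]
  simpa using
    (((hf' _).hasFDerivAt.comp_hasDerivAt s (hγ s)).clm_apply (hasDerivAt_const s v)).deriv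

theorem norm_mul_clm_apply_le {L : E →L[ℝ] ℝ} {M : ℝ} (hL : ‖L‖ ≤ M) (w : ℝ) (q : E) :
    ‖w * L q‖ ≤ M * ‖‖q‖ * w‖ := by
  rw [norm_mul, norm_mul, norm_norm]
  have := (L.le_opNorm q).trans (mul_le_mul_of_nonneg_right hL (norm_nonneg q))
  nlinarith [norm_nonneg w]

theorem norm_mul_clm_apply_apply_le {B : E →L[ℝ] E →L[ℝ] ℝ} {M : ℝ} (hB : ‖B‖ ≤ M) (w : ℝ)
    (q : E) : ‖w * B q q‖ ≤ M * ‖‖q‖ ^ 2 * w‖ := by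
  rw [norm_mul, norm_mul, norm_pow, norm_norm]
  have := (B.le_opNorm₂ q q).trans
    (mul_le_mul_of_nonneg_right (mul_le_mul_of_nonneg_right hB (norm_nonneg q)) (norm_nonneg q))
  nlinarith [norm_nonneg w]

variable [MeasurableSpace E]

noncomputable def kernelSmoothing (μ : Measure E) (W φ : E → ℝ) (p : E) (τ : ℝ) : ℝ :=
  ∫ q, W q * φ (p - τ • q) ∂μ

theorem kernelSmoothing_zero (μ : Measure E) (W φ : E → ℝ) (p : E) :
    kernelSmoothing μ W φ p 0 = (∫ q, W q ∂μ) * φ p := by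
  simp [kernelSmoothing, integral_mul_const]

theorem integral_mul_clm_eq_zero_of_even [MeasurableNeg E] {μ : Measure E} [μ.IsNegInvariant]
    {W : E → ℝ} (hW : ∀ q, W (-q) = W q) (L : E →L[ℝ] ℝ) : ∫ q, W q * L q ∂μ = 0 := by
  have h := integral_neg_eq_self (fun q => W q * L q) μ
  simp only [hW, map_neg, mul_neg, integral_neg] at h
  linarith

theorem integral_rescaled_mul_eq_kernelSmoothing [BorelSpace E] [FiniteDimensional ℝ E]
    (μ : Measure E) [μ.IsAddHaarMeasure] (W φ : E → ℝ) (p : E) {τ : ℝ} (hτ : τ ≠ 0) :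
    ∫ s, |τ ^ Module.finrank ℝ E|⁻¹ * W (τ⁻¹ • (p - s)) * φ s ∂μ = kernelSmoothing μ W φ p τ := by
  set g : E → ℝ := fun s => W (τ⁻¹ • (p - s)) * φ s
  have hg : ∀ q, g (p + (-τ) • q) = W q * φ (p - τ • q) := fun q => by
    simp [g, neg_smul, ← sub_eq_add_neg, smul_smul, hτ]
  have h := Measure.integral_comp_smul μ (fun w => g (p + w)) (-τ)
  rw [integral_add_left_eq_self g p] at h
  simp only [hg] at h
  simp only [kernelSmoothing, h, mul_assoc]
  rw [integral_const_mul, smul_eq_mul]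
  congr 1
  rw [neg_pow, abs_inv, abs_mul, abs_pow (-1), abs_neg, abs_one, one_pow, one_mul]

variable [OpensMeasurableSpace E] {μ : Measure E} {W φ : E → ℝ} {M₀ M₁ M₂ : ℝ}

theorem hasDerivAt_kernelSmoothing (hW : Integrable W μ)
    (hW₁ : Integrable (fun q => ‖q‖ * W q) μ) (hφ : ContDiff ℝ 1 φ)
    (hφ₀ : ∀ p, ‖φ p‖ ≤ M₀) (hφ₁ : ∀ p, ‖fderiv ℝ φ p‖ ≤ M₁) (p : E) (τ : ℝ) :
    HasDerivAt (kernelSmoothing μ W φ p) (-∫ q, W q * fderiv ℝ φ (p - τ • q) q ∂μ) τ := by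
  have hline : ∀ t : ℝ, Continuous fun q : E => p - t • q := by fun_prop
  have hmeas : ∀ t : ℝ, AEStronglyMeasurable (fun q => W q * φ (p - t • q)) μ := fun t =>
    hW.aestronglyMeasurable.mul (hφ.continuous.comp (hline t)).aestronglyMeasurable
  have hint : Integrable (fun q => W q * φ (p - τ • q)) μ := by
    refine (hW.norm.mul_const M₀).mono' (hmeas τ) (ae_of_all _ fun q => ?_)
    rw [norm_mul]
    exact mul_le_mul_of_nonneg_left (hφ₀ _) (norm_nonneg _)
  have hmeas' : AEStronglyMeasurable (fun q => W q * -fderiv ℝ φ (p - τ • q) q) μ :=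
    hW.aestronglyMeasurable.mul (((hφ.continuous_fderiv one_ne_zero).comp (hline τ)).clm_apply
      continuous_id).neg.aestronglyMeasurable
  have hbound : ∀ q, ∀ t ∈ (univ : Set ℝ),
      ‖W q * -fderiv ℝ φ (p - t • q) q‖ ≤ M₁ * ‖‖q‖ * W q‖ := fun q t _ => by
    simpa only [mul_neg, norm_neg] using norm_mul_clm_apply_le (hφ₁ _) (W q) q
  have hderiv := hasDerivAt_integral_of_dominated_loc_of_deriv_le univ_mem
    (Eventually.of_forall hmeas) hint hmeas' (ae_of_all _ hbound) (hW₁.norm.const_mul M₁)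
    (ae_of_all _ fun q t _ =>
      (hasDerivAt_comp_sub_smul (hφ.differentiable one_ne_zero _)).const_mul (W q))
  simp only [mul_neg, integral_neg] at hderiv
  exact hderiv.2

theorem hasDerivAt_integral_mul_fderiv_comp_sub_smul (hW : Integrable W μ)
    (hW₂ : Integrable (fun q => ‖q‖ ^ 2 * W q) μ) (hφ : ContDiff ℝ 2 φ)
    (hφ₁ : ∀ p, ‖fderiv ℝ φ p‖ ≤ M₁) (hφ₂ : ∀ p, ‖fderiv ℝ (fderiv ℝ φ) p‖ ≤ M₂) (p : E) (τ : ℝ) :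
    HasDerivAt (fun t => ∫ q, W q * fderiv ℝ φ (p - t • q) q ∂μ)
      (-∫ q, W q * fderiv ℝ (fderiv ℝ φ) (p - τ • q) q q ∂μ) τ := by
  have hline : ∀ t : ℝ, Continuous fun q : E => p - t • q := by fun_prop
  have hφ' : ContDiff ℝ 1 (fderiv ℝ φ) := hφ.fderiv_right (by norm_num)
  have hmeas : ∀ t : ℝ, AEStronglyMeasurable (fun q => W q * fderiv ℝ φ (p - t • q) q) μ :=
    fun t => hW.aestronglyMeasurable.mul
      ((hφ'.continuous.comp (hline t)).clm_apply continuous_id).aestronglyMeasurable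
  have hW₁ := hW.mul_of_integrable_sq_mul continuous_norm.aestronglyMeasurable hW₂
  have hint : Integrable (fun q => W q * fderiv ℝ φ (p - τ • q) q) μ :=
    (hW₁.norm.const_mul M₁).mono' (hmeas τ)
      (ae_of_all _ fun q => norm_mul_clm_apply_le (hφ₁ _) (W q) q)
  have hmeas' : AEStronglyMeasurable
      (fun q => W q * -fderiv ℝ (fderiv ℝ φ) (p - τ • q) q q) μ :=
    hW.aestronglyMeasurable.mul ((((hφ'.continuous_fderiv one_ne_zero).comp (hline τ)).clm_apply
      continuous_id).clm_apply continuous_id).neg.aestronglyMeasurable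
  have hbound : ∀ q, ∀ t ∈ (univ : Set ℝ),
      ‖W q * -fderiv ℝ (fderiv ℝ φ) (p - t • q) q q‖ ≤ M₂ * ‖‖q‖ ^ 2 * W q‖ := fun q t _ => by
    simpa only [mul_neg, norm_neg] using norm_mul_clm_apply_apply_le (hφ₂ _) (W q) q
  have hderiv := hasDerivAt_integral_of_dominated_loc_of_deriv_le univ_mem
    (Eventually.of_forall hmeas) hint hmeas' (ae_of_all _ hbound) (hW₂.norm.const_mul M₂)
    (ae_of_all _ fun q t _ => by
      simpa using ((hasDerivAt_comp_sub_smul (p := p) (q := q)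
        (hφ'.differentiable one_ne_zero _)).clm_apply (hasDerivAt_const t q)).const_mul (W q))
  simp only [mul_neg, integral_neg] at hderiv
  exact hderiv.2

theorem kernelSmoothing_sub_isLittleO [MeasurableNeg E] [μ.IsNegInvariant]
    (hW_even : ∀ q, W (-q) = W q) (hW : Integrable W μ)
    (hW₂ : Integrable (fun q => ‖q‖ ^ 2 * W q) μ) (hφ : ContDiff ℝ 2 φ)
    (hφ₀ : ∀ p, ‖φ p‖ ≤ M₀) (hφ₁ : ∀ p, ‖fderiv ℝ φ p‖ ≤ M₁)
    (hφ₂ : ∀ p, ‖fderiv ℝ (fderiv ℝ φ) p‖ ≤ M₂) (p : E) :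
    (fun τ => kernelSmoothing μ W φ p τ - (∫ q, W q ∂μ) * φ p
        - (∫ q, W q * fderiv ℝ (fderiv ℝ φ) p q q ∂μ) / 2 * τ ^ 2) =o[𝓝 0] fun τ => τ ^ 2 := by
  have hW₁ := hW.mul_of_integrable_sq_mul continuous_norm.aestronglyMeasurable hW₂
  have h := isLittleO_sub_sub_sq_of_hasDerivAt
    (hasDerivAt_kernelSmoothing hW hW₁ (hφ.of_le one_le_two) hφ₀ hφ₁ p)
    (by simp [integral_mul_clm_eq_zero_of_even hW_even])
    (by simpa using (hasDerivAt_integral_mul_fderiv_comp_sub_smul hW hW₂ hφ hφ₁ hφ₂ p 0).fun_neg)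
  rwa [kernelSmoothing_zero] at h

end KernelSmoothing

theorem integrable_sq_norm_mul_prod {K : ℝ → ℝ} (hK : Integrable K)
    (hK₂ : Integrable fun a => a ^ 2 * K a) :
    Integrable fun q : ℝ × ℝ => ‖q‖ ^ 2 * (K q.1 * K q.2) := by
  rw [Measure.volume_eq_prod]
  refine ((hK₂.norm.mul_prod hK.norm).add (hK.norm.mul_prod hK₂.norm)).mono'
    ((continuous_norm.pow 2).aestronglyMeasurable.mul (hK.mul_prod hK).aestronglyMeasurable)
    (ae_of_all _ fun q => ?_)
  have hq : ‖q‖ ^ 2 ≤ q.1 ^ 2 + q.2 ^ 2 := by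
    rw [Prod.norm_def, Real.norm_eq_abs, Real.norm_eq_abs]
    rcases max_cases |q.1| |q.2| with ⟨h, _⟩ | ⟨h, _⟩ <;> rw [h, sq_abs] <;>
      nlinarith [sq_nonneg q.1, sq_nonneg q.2]
  simp only [norm_mul, norm_pow, Pi.add_apply, Real.norm_eq_abs, sq_abs]
  nlinarith [mul_nonneg (abs_nonneg (K q.1)) (abs_nonneg (K q.2))]

theorem integral_prod_mul_clm_apply_apply {K : ℝ → ℝ} (hK_even : ∀ a, K (-a) = K a)
    (hK : Integrable K) (hK₂ : Integrable fun a => a ^ 2 * K a) (T : ℝ × ℝ →L[ℝ] ℝ × ℝ →L[ℝ] ℝ) :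
    ∫ q : ℝ × ℝ, K q.1 * K q.2 * T q q
      = (∫ a, a ^ 2 * K a) * (∫ a, K a) * (T (1, 0) (1, 0) + T (0, 1) (0, 1)) := by
  have hK₁ : Integrable fun a => a * K a :=
    hK.mul_of_integrable_sq_mul measurable_id.aestronglyMeasurable hK₂
  have hodd : ∫ a, a * K a = 0 := by
    simpa [mul_comm] using integral_mul_clm_eq_zero_of_even hK_even (ContinuousLinearMap.id ℝ ℝ)
  have hT : ∀ q : ℝ × ℝ, K q.1 * K q.2 * T q q = T (1, 0) (1, 0) * (q.1 ^ 2 * K q.1 * K q.2)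
      + ((T (1, 0) (0, 1) + T (0, 1) (1, 0)) * (q.1 * K q.1 * (q.2 * K q.2))
      + T (0, 1) (0, 1) * (K q.1 * (q.2 ^ 2 * K q.2))) := fun q => by
    have hq : q = q.1 • ((1 : ℝ), (0 : ℝ)) + q.2 • ((0 : ℝ), (1 : ℝ)) := by ext <;> simp
    have hTq : T q q = q.1 ^ 2 * T (1, 0) (1, 0) + q.1 * q.2 * (T (1, 0) (0, 1) + T (0, 1) (1, 0))
        + q.2 ^ 2 * T (0, 1) (0, 1) := by
      conv_lhs => rw [hq]
      simp only [map_add, map_smul, FunLike.coe_add, FunLike.coe_smul, Pi.add_apply, Pi.smul_apply,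
        smul_eq_mul]
      ring
    rw [hTq]
    ring
  rw [Measure.volume_eq_prod] at *
  simp only [hT]
  rw [integral_add ((hK₂.mul_prod hK).const_mul _)
      (((hK₁.mul_prod hK₁).const_mul _).fun_add ((hK.mul_prod hK₂).const_mul _)),
    integral_add ((hK₁.mul_prod hK₁).const_mul _) ((hK.mul_prod hK₂).const_mul _),
    integral_const_mul, integral_const_mul, integral_const_mul,
    integral_prod_mul (fun a => a ^ 2 * K a) K,
    integral_prod_mul (fun a => a * K a) (fun a => a * K a),
    integral_prod_mul K (fun a => a ^ 2 * K a), hodd]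
  ring

theorem deriv_deriv_add_deriv_deriv_eq {f : ℝ → ℝ → ℝ} (hf : ContDiff ℝ 2 (Function.uncurry f))
    (x y : ℝ) :
    deriv (deriv fun s => f s y) x + deriv (deriv fun t => f x t) y
      = fderiv ℝ (fderiv ℝ (Function.uncurry f)) (x, y) (1, 0) (1, 0)
        + fderiv ℝ (fderiv ℝ (Function.uncurry f)) (x, y) (0, 1) (0, 1) := by
  have hf' : Differentiable ℝ (fderiv ℝ (Function.uncurry f)) :=
    (hf.fderiv_right le_rfl).differentiable one_ne_zero
  have hxx := deriv_deriv_comp_of_hasDerivAt (hf.differentiable two_ne_zero) hf'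
    (fun s => (hasDerivAt_id s).prodMk (hasDerivAt_const s y)) x
  have hyy := deriv_deriv_comp_of_hasDerivAt (hf.differentiable two_ne_zero) hf'
    (fun t => (hasDerivAt_const t x).prodMk (hasDerivAt_id t)) y
  simp only [Function.uncurry_apply_pair, id] at hxx hyy
  rw [hxx, hyy]

theorem integral_rescaled_prod_mul_eq_kernelSmoothing (K : ℝ → ℝ) (f : ℝ → ℝ → ℝ) (x y : ℝ)
    {τ : ℝ} (hτ : 0 < τ) :
    ∫ p : ℝ × ℝ, 1 / τ ^ 2 * K ((x - p.1) / τ) * K ((y - p.2) / τ) * f p.1 p.2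
      = kernelSmoothing volume (fun q => K q.1 * K q.2) (Function.uncurry f) (x, y) τ := by
  rw [← integral_rescaled_mul_eq_kernelSmoothing volume _ _ (x, y) hτ.ne']
  simp only [div_eq_inv_mul, mul_one, mul_assoc, Module.finrank_prod, Module.finrank_self,
    Nat.reduceAdd, abs_pow, abs_of_pos hτ, Prod.smul_fst, Prod.smul_snd, Prod.fst_sub,
    Prod.snd_sub, smul_eq_mul]
  rfl

theorem stmt_4_general {Ω : Type*} [MeasureSpace Ω]
    (Kn : Ω → ℕ) (b d : Ω → ℕ → ℝ) (κP : ℝ → ℝ → ℝ) (K : ℝ → ℝ) (x y μ2 : ℝ)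
    (hKsymm : ∀ a, K (-a) = K a)
    (hKsm : ContDiff ℝ 2 K)
    (hKbdd : ∃ M, ∀ a, |K a| ≤ M)
    (hKint : Integrable K)
    (hKnorm : (∫ a, K a) = 1)
    (hK2int : Integrable fun a => a ^ 2 * K a)
    (hμ2 : μ2 = ∫ a, a ^ 2 * K a)
    (hκ_sm : ContDiff ℝ 2 (Function.uncurry κP))
    (hκ_bdd : ∀ n ≤ 2, ∃ M, ∀ p : ℝ × ℝ, ‖iteratedFDeriv ℝ n (Function.uncurry κP) p‖ ≤ M)
    (hid : ∀ h : ℝ → ℝ → ℝ, Continuous (Function.uncurry h) → (∃ M, ∀ s t, |h s t| ≤ M) →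
      (∫ ω, ∑ j ∈ Finset.range (Kn ω), (d ω j - b ω j) * h (b ω j) (d ω j))
        = ∫ p : ℝ × ℝ, h p.1 p.2 * κP p.1 p.2) :
    (fun τ : ℝ =>
        (∫ ω, ∑ j ∈ Finset.range (Kn ω),
            (d ω j - b ω j) * ((1 / τ ^ 2) * K ((x - b ω j) / τ) * K ((y - d ω j) / τ)))
          - κP x y
          - μ2 / 2 * (deriv (deriv fun s => κP s y) x + deriv (deriv fun t => κP x t) y) * τ ^ 2)
      =o[𝓝[>] 0] fun τ => τ ^ 2 := by
  obtain ⟨M₀, hM₀⟩ := hκ_bdd 0 (by norm_num)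
  obtain ⟨M₁, hM₁⟩ := hκ_bdd 1 (by norm_num)
  obtain ⟨M₂, hM₂⟩ := hκ_bdd 2 (by norm_num)
  obtain ⟨MK, hMK⟩ := hKbdd
  have hsmooth := kernelSmoothing_sub_isLittleO (μ := volume) (W := fun q => K q.1 * K q.2)
    (fun q => by simp [hKsymm]) (by rw [Measure.volume_eq_prod]; exact hKint.mul_prod hKint)
    (integrable_sq_norm_mul_prod hKint hK2int) hκ_sm (fun p => by simpa using hM₀ p)
    (fun p => by simpa using hM₁ p)
    (fun p => by rw [← norm_iteratedFDeriv_one, norm_iteratedFDeriv_fderiv]; exact hM₂ p) (x, y)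
  have hmass : ∫ q : ℝ × ℝ, K q.1 * K q.2 = 1 := by
    rw [Measure.volume_eq_prod, integral_prod_mul K K, hKnorm, one_mul]
  rw [hmass, integral_prod_mul_clm_apply_apply hKsymm hKint hK2int, hKnorm, ← hμ2] at hsmooth
  refine (hsmooth.mono nhdsWithin_le_nhds).congr' ?_ EventuallyEq.rfl
  filter_upwards [self_mem_nhdsWithin] with τ (hτ : 0 < τ)
  have hK := hKsm.continuous
  have hMK₀ : 0 ≤ MK := (abs_nonneg _).trans (hMK 0)
  have hbdd : ∃ M, ∀ s t, |1 / τ ^ 2 * K ((x - s) / τ) * K ((y - t) / τ)| ≤ M :=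
    ⟨1 / τ ^ 2 * MK * MK, fun s t => by
      rw [abs_mul, abs_mul, abs_of_pos (by positivity : 0 < 1 / τ ^ 2)]
      gcongr <;> exact hMK _⟩
  rw [deriv_deriv_add_deriv_deriv_eq hκ_sm, hid _ (by unfold Function.uncurry; fun_prop) hbdd,
    integral_rescaled_prod_mul_eq_kernelSmoothing K κP x y hτ]
  simp only [Function.uncurry_apply_pair]
  ring

/-- bias expansion of the smoothed persistence intensity estimator. -/
theorem stmt_4 {Ω : Type*} [MeasureSpace Ω] [IsProbabilityMeasure (ℙ : Measure Ω)]
    (Kn : Ω → ℕ) (b d : Ω → ℕ → ℝ) (κP : ℝ → ℝ → ℝ) (K : ℝ → ℝ) (x y μ2 : ℝ)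
    (hKsymm : ∀ a, K (-a) = K a)
    (hKsm : ContDiff ℝ 2 K)
    (hKbdd : ∃ M, ∀ a, |K a| ≤ M)
    (hKint : Integrable K)
    (hKnorm : (∫ a, K a) = 1)
    (hK2int : Integrable fun a => a ^ 2 * K a)
    (hμ2 : μ2 = ∫ a, a ^ 2 * K a)
    (hκ_sm : ContDiff ℝ 2 (Function.uncurry κP))
    (hκ_bdd : ∀ n ≤ 2, ∃ M, ∀ p : ℝ × ℝ, ‖iteratedFDeriv ℝ n (Function.uncurry κP) p‖ ≤ M)
    (hκ_uc : UniformContinuous fun p : ℝ × ℝ => iteratedFDeriv ℝ 2 (Function.uncurry κP) p)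
    (hκ_int : Integrable (Function.uncurry κP))
    (hid : ∀ h : ℝ → ℝ → ℝ, Continuous (Function.uncurry h) → (∃ M, ∀ s t, |h s t| ≤ M) →
      (∫ ω, ∑ j ∈ Finset.range (Kn ω), (d ω j - b ω j) * h (b ω j) (d ω j))
        = ∫ p : ℝ × ℝ, h p.1 p.2 * κP p.1 p.2) :
    (fun τ : ℝ =>
        (∫ ω, ∑ j ∈ Finset.range (Kn ω),
            (d ω j - b ω j) * ((1 / τ ^ 2) * K ((x - b ω j) / τ) * K ((y - d ω j) / τ)))
          - κP x y
          - μ2 / 2 * (deriv (deriv fun s => κP s y) x + deriv (deriv fun t => κP x t) y) * τ ^ 2)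
      =o[𝓝[>] 0] fun τ => τ ^ 2 :=
  stmt_4_general Kn b d κP K x y μ2 hKsymm hKsm hKbdd hKint hKnorm hK2int hμ2 hκ_sm hκ_bdd hid
end

section
/- Let $K$ be a continuous kernel and let two persistence diagrams $\mathcal{D} = \{(b_j,d_j)\}_{j=1}^m$ and $\mathcal{D}' = \{(b'_j,d'_j)\}_{j=1}^m$ have the same number of points, matched so that $|b_j - b'_j| \le \epsilon$ and $|d_j - d'_j| \le \epsilon$ for all $j$. If $K$ is Lipschitz with constant $L$ and bounded by $M$, and all lifetimes are bounded by $D$, then the smoothed intensities satisfy $\sup_{x,y} |\hat{\kappa}_\tau^{\mathcal{D}}(x,y) - \hat{\kappa}_\tau^{\mathcal{D}'}(x,y)| \le \frac{m}{\tau^2}\left(2M^2 \epsilon + \frac{2 D L M \epsilon}{\tau}\right)$. -/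
/-! Telescope `w K₁ K₂ - w' K₁' K₂'` one factor at a time; each difference is controlled by the
matching: `|w - w'| ≤ 2ε`, and `|K₁ - K₁'|, |K₂ - K₂'| ≤ Lε/τ` because the kernel is
evaluated at points `(x - b)/τ` that move by at most `ε/τ`. The remaining factors are bounded by
`M` and `D`, and the `m` terms of the sum share the prefactor `τ⁻²`. -/

open Real Finset

theorem norm_mul_mul_sub_mul_mul_le {R : Type*} [NormedRing R] (a b c a' b' c' : R) :
    ‖a * b * c - a' * b' * c'‖
      ≤ ‖a - a'‖ * ‖b‖ * ‖c‖ + ‖a'‖ * ‖b - b'‖ * ‖c‖ + ‖a'‖ * ‖b'‖ * ‖c - c'‖ := by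
  have htelescope : a * b * c - a' * b' * c'
      = (a - a') * b * c + a' * (b - b') * c + a' * b' * (c - c') := by noncomm_ring
  rw [htelescope]
  exact norm_add₃_le.trans (by gcongr <;> exact norm_mul₃_le)

theorem abs_sum_sub_sum_le_card_mul {ι : Type*} (s : Finset ι) (f g : ι → ℝ)
    {C : ℝ} (h : ∀ i ∈ s, |f i - g i| ≤ C) :
    |∑ i ∈ s, f i - ∑ i ∈ s, g i| ≤ #s * C := by
  rw [← sum_sub_distrib]
  calc |∑ i ∈ s, (f i - g i)| ≤ ∑ i ∈ s, |f i - g i| := abs_sum_le_sum_abs _ _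
    _ ≤ #s • C := sum_le_card_nsmul _ _ _ h
    _ = #s * C := nsmul_eq_mul _ _

section Kernel

variable {K : ℝ → ℝ} {L M : ℝ}

theorem nonneg_of_abs_sub_le_mul_abs_sub (hLip : ∀ s t, |K s - K t| ≤ L * |s - t|) : 0 ≤ L := by
  simpa using (abs_nonneg _).trans (hLip 1 0)

theorem abs_comp_div_sub_comp_div_le (hLip : ∀ s t, |K s - K t| ≤ L * |s - t|) {τ : ℝ}
    (hτ : 0 < τ) (x s t : ℝ) :
    |K ((x - s) / τ) - K ((x - t) / τ)| ≤ L * |s - t| / τ := by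
  calc |K ((x - s) / τ) - K ((x - t) / τ)| ≤ L * |(x - s) / τ - (x - t) / τ| := hLip _ _
    _ = L * |s - t| / τ := by
      rw [← sub_div, sub_sub_sub_cancel_left, abs_div, abs_of_pos hτ, abs_sub_comm, mul_div_assoc]

noncomputable def persistenceIntensity {ι : Type*} [Fintype ι] (K : ℝ → ℝ) (τ : ℝ)
    (b d : ι → ℝ) (x y : ℝ) : ℝ :=
  ∑ j, (d j - b j) * ((1 / τ ^ 2) * K ((x - b j) / τ) * K ((y - d j) / τ))

theorem abs_lifetime_mul_kernel_sub_le (hLip : ∀ s t, |K s - K t| ≤ L * |s - t|)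
    (hM : ∀ s, |K s| ≤ M) {τ ε D b d b' d' : ℝ} (hτ : 0 < τ) (hb : |b - b'| ≤ ε)
    (hd : |d - d'| ≤ ε) (hlife' : 0 ≤ d' - b' ∧ d' - b' ≤ D) (x y : ℝ) :
    |(d - b) * K ((x - b) / τ) * K ((y - d) / τ) - (d' - b') * K ((x - b') / τ) * K ((y - d') / τ)|
      ≤ 2 * M ^ 2 * ε + 2 * D * L * M * ε / τ := by
  have hL : 0 ≤ L := nonneg_of_abs_sub_le_mul_abs_sub hLip
  have hM0 : 0 ≤ M := (abs_nonneg _).trans (hM 0)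
  have hlifetime : |(d - b) - (d' - b')| ≤ 2 * ε := by
    rw [abs_le] at hb hd ⊢
    constructor <;> linarith
  have hlifetime' : |d' - b'| ≤ D := abs_le.2 ⟨by linarith, hlife'.2⟩
  have hD : 0 ≤ D := hlife'.1.trans hlife'.2
  have hε : 0 ≤ ε := (abs_nonneg _).trans hb
  have hbirth : |K ((x - b) / τ) - K ((x - b') / τ)| ≤ L * ε / τ :=
    (abs_comp_div_sub_comp_div_le hLip hτ x b b').trans (by gcongr)
  have hdeath : |K ((y - d) / τ) - K ((y - d') / τ)| ≤ L * ε / τ :=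
    (abs_comp_div_sub_comp_div_le hLip hτ y d d').trans (by gcongr)
  calc _ ≤ |(d - b) - (d' - b')| * |K ((x - b) / τ)| * |K ((y - d) / τ)|
          + |d' - b'| * |K ((x - b) / τ) - K ((x - b') / τ)| * |K ((y - d) / τ)|
          + |d' - b'| * |K ((x - b') / τ)| * |K ((y - d) / τ) - K ((y - d') / τ)| := by
        simpa only [Real.norm_eq_abs] using norm_mul_mul_sub_mul_mul_le (d - b)
          (K ((x - b) / τ)) (K ((y - d) / τ)) (d' - b') (K ((x - b') / τ)) (K ((y - d') / τ))
    _ ≤ 2 * ε * M * M + D * (L * ε / τ) * M + D * M * (L * ε / τ) := by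
        gcongr <;> exact hM _
    _ = 2 * M ^ 2 * ε + 2 * D * L * M * ε / τ := by ring

theorem abs_persistenceIntensity_sub_le {ι : Type*} [Fintype ι]
    (hLip : ∀ s t, |K s - K t| ≤ L * |s - t|) (hM : ∀ s, |K s| ≤ M) {τ ε D : ℝ} (hτ : 0 < τ)
    {b d b' d' : ι → ℝ} (hb : ∀ j, |b j - b' j| ≤ ε) (hd : ∀ j, |d j - d' j| ≤ ε)
    (hlife' : ∀ j, 0 ≤ d' j - b' j ∧ d' j - b' j ≤ D) (x y : ℝ) :
    |persistenceIntensity K τ b d x y - persistenceIntensity K τ b' d' x y|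
      ≤ (Fintype.card ι / τ ^ 2) * (2 * M ^ 2 * ε + 2 * D * L * M * ε / τ) := by
  have hfactor : ∀ (b d : ι → ℝ), persistenceIntensity K τ b d x y
      = (1 / τ ^ 2) * ∑ j, (d j - b j) * K ((x - b j) / τ) * K ((y - d j) / τ) := by
    intro b d
    rw [persistenceIntensity, mul_sum]
    exact sum_congr rfl fun _ _ => by ring
  have hsum := abs_sum_sub_sum_le_card_mul univ _ _ fun j _ =>
    abs_lifetime_mul_kernel_sub_le hLip hM hτ (hb j) (hd j) (hlife' j) x y
  rw [hfactor, hfactor, ← mul_sub, abs_mul, abs_of_pos (by positivity)]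
  calc _ ≤ 1 / τ ^ 2 * (#univ * (2 * M ^ 2 * ε + 2 * D * L * M * ε / τ)) := by gcongr
    _ = _ := by rw [card_univ]; ring

end Kernel

theorem stmt_14_general (m : ℕ) (b d b' d' : Fin m → ℝ) (K : ℝ → ℝ)
    (L M D ε τ : ℝ) (hτ : 0 < τ)
    (hLip : ∀ s t, |K s - K t| ≤ L * |s - t|)
    (hM : ∀ s, |K s| ≤ M)
    (hb : ∀ j, |b j - b' j| ≤ ε) (hd : ∀ j, |d j - d' j| ≤ ε)
    (hlife' : ∀ j, 0 ≤ d' j - b' j ∧ d' j - b' j ≤ D) :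
    ∀ x y : ℝ,
      |(∑ j, (d j - b j) * ((1 / τ ^ 2) * K ((x - b j) / τ) * K ((y - d j) / τ)))
          - ∑ j, (d' j - b' j) * ((1 / τ ^ 2) * K ((x - b' j) / τ) * K ((y - d' j) / τ))|
        ≤ ((m : ℝ) / τ ^ 2) * (2 * M ^ 2 * ε + 2 * D * L * M * ε / τ) := by
  intro x y
  simpa only [persistenceIntensity, Fintype.card_fin] using
    abs_persistenceIntensity_sub_le hLip hM hτ hb hd hlife' x y

/-- stability of the smoothed persistence intensity under an
`ε`-matching of diagrams. -/
theorem stmt_14 (m : ℕ) (b d b' d' : Fin m → ℝ) (K : ℝ → ℝ)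
    (L M D ε τ : ℝ) (hτ : 0 < τ) (hε : 0 ≤ ε)
    (hLip : ∀ s t, |K s - K t| ≤ L * |s - t|)
    (hM : ∀ s, |K s| ≤ M)
    (hb : ∀ j, |b j - b' j| ≤ ε) (hd : ∀ j, |d j - d' j| ≤ ε)
    (hlife : ∀ j, 0 ≤ d j - b j ∧ d j - b j ≤ D)
    (hlife' : ∀ j, 0 ≤ d' j - b' j ∧ d' j - b' j ≤ D) :
    ∀ x y : ℝ,
      |(∑ j, (d j - b j) * ((1 / τ ^ 2) * K ((x - b j) / τ) * K ((y - d j) / τ)))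
          - ∑ j, (d' j - b' j) * ((1 / τ ^ 2) * K ((x - b' j) / τ) * K ((y - d' j) / τ))|
        ≤ ((m : ℝ) / τ ^ 2) * (2 * M ^ 2 * ε + 2 * D * L * M * ε / τ) :=
  stmt_14_general m b d b' d' K L M D ε τ hτ hLip hM hb hd hlife'
end
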